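/- If EpochSGD is run with epoch lengths T_k = 16·2^{k−1}, and the algorithm terminates at epoch K when the total budget T is exhausted (so T ≤ 16(2^K − 1) − 1), then the error bound E Δ_K ≤ G²/(2^K μ) implies E[F(x) − F(x⋆)] ≤ 16 G²/(μT) and, by μ-strong convexity, E‖x − x⋆‖² ≤ 32 G²/(μ² T). -/
import Mathlib


open MeasureTheory

/-- Final guarantee of EpochSGD: if the budget T satisfies T ≤ 16(2^K − 1) − 1
and E[F(x) − F(x⋆)] ≤ G²/(2^K μ), then E[F(x) − F(x⋆)] ≤ 16G²/(μT) and, by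
μ-strong convexity, E‖x − x⋆‖² ≤ 32G²/(μ²T). -/
theorem epoch_sgd_final {d : ℕ} {Ω : Type*} [MeasurableSpace Ω] (P : Measure Ω)
    [IsProbabilityMeasure P]
    (F : EuclideanSpace ℝ (Fin d) → ℝ) (xstar : EuclideanSpace ℝ (Fin d))
    (μ G : ℝ) (hμ : 0 < μ) (hG : 0 < G) (K T : ℕ) (hTpos : 0 < T)
    (hT : T ≤ 16 * (2^K - 1) - 1)
    (x : Ω → EuclideanSpace ℝ (Fin d))
    (hSC : ∀ ω, ‖x ω - xstar‖^2 ≤ 2/μ * (F (x ω) - F xstar))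
    (hInt1 : Integrable (fun ω => F (x ω) - F xstar) P)
    (hInt2 : Integrable (fun ω => ‖x ω - xstar‖^2) P)
    (hK : ∫ ω, (F (x ω) - F xstar) ∂P ≤ G^2 / (2^K * μ)) :
    ∫ ω, (F (x ω) - F xstar) ∂P ≤ 16 * G^2 / (μ * T) ∧
    ∫ ω, ‖x ω - xstar‖^2 ∂P ≤ 32 * G^2 / (μ^2 * T) := by
  have hTn : T ≤ 16 * 2^K := by
    have := Nat.one_le_two_pow (n := K)
    omega
  have hTr : (T:ℝ) ≤ 16 * 2^K := by exact_mod_cast hTn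
  have hTpos' : (0:ℝ) < T := by exact_mod_cast hTpos
  have h2K : (0:ℝ) < 2^K := by positivity
  have hbound : G^2 / (2^K * μ) ≤ 16 * G^2 / (μ * T) := by
    rw [div_le_div_iff₀ (by positivity) (by positivity)]
    nlinarith [mul_le_mul_of_nonneg_left hTr (by positivity : (0:ℝ) ≤ G^2 * μ)]
  have h1 : ∫ ω, (F (x ω) - F xstar) ∂P ≤ 16 * G^2 / (μ * T) := hK.trans hbound
  refine ⟨h1, ?_⟩
  have h2 : ∫ ω, ‖x ω - xstar‖^2 ∂P ≤ ∫ ω, 2/μ * (F (x ω) - F xstar) ∂P :=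
    integral_mono hInt2 (hInt1.const_mul _) hSC
  rw [integral_const_mul] at h2
  have h3 : 2/μ * ∫ ω, (F (x ω) - F xstar) ∂P ≤ 2/μ * (16 * G^2 / (μ * T)) := by
    apply mul_le_mul_of_nonneg_left h1 (by positivity)
  have h4 : 2/μ * (16 * G^2 / (μ * T)) = 32 * G^2 / (μ^2 * T) := by
    field_simp; ring
  linarith
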